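/- arXiv:1104.3604 — 8 statements merged into one kernel-verified Lean document; each statement's English description precedes it below -/
import Mathlib

section
/- For every real x > 0, every real h ≥ 1 and every integer k ≥ 1, the following are equivalent: (i) the generalized Hilbert matrix A_k(x,h) is positive semidefinite; (ii) det A_k(x,h) ≥ 0; (iii) f_k ≥ 0, where f_k is obtained from the recursion f_0 := x, f_{ℓ+1} := f_ℓ·((k−ℓ)h+1)^2/((k−ℓ)h)^2 − (2(k−ℓ)h+1)/((k−ℓ)h)^2 for 0 ≤ ℓ ≤ k−1; (iv) x ≥ b(k,h). -/
/-- The generalized Hilbert matrix `A_k(x,h)`: a `(k+1) × (k+1)` real matrix whose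
`(i,j)` entry (0-based) is `x` if `i = j = 0` and `1/((i+j)h+1)` otherwise. -/
noncomputable def genHilbert (k : ℕ) (x h : ℝ) : Matrix (Fin (k + 1)) (Fin (k + 1)) ℝ :=
  fun i j =>
    if i = 0 ∧ j = 0 then x
    else 1 / ((((i : ℕ) : ℝ) + ((j : ℕ) : ℝ)) * h + 1)

/-- The constants `b(j,h)`: `b(1,h) = (2h+1)/(h+1)²` and, for `j ≥ 2`,
`b(j,h) = (b(j-1,h) + (2jh+1)/(jh)²) · (jh/(jh+1))²`.  (The value at `j = 0`
is irrelevant and set to `0`.) -/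
noncomputable def bGH (h : ℝ) : ℕ → ℝ
  | 0 => 0
  | 1 => (2 * h + 1) / (h + 1) ^ 2
  | (j + 2) =>
      (bGH h (j + 1) + (2 * ((j : ℝ) + 2) * h + 1) / ((((j : ℝ) + 2) * h) ^ 2)) *
        ((((j : ℝ) + 2) * h) / (((j : ℝ) + 2) * h + 1)) ^ 2

/-!
With `n = k + 1`, the last diagonal entry of `A_{k+1}(x,h)` is `1/(2nh+1) > 0`, and its Schur
complement is `D A_k(x',h) D`, where `x' = hilbertShift h n x` and `D` is the invertible diagonal
matrix with entries `(i-n)h/((i+n)h+1)`; off the corner this is the identity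
`1/((a+b)h+1) - (2nh+1)/(((a+n)h+1)((b+n)h+1)) = (a-n)(b-n)h² / (((a+n)h+1)((b+n)h+1)((a+b)h+1))`.
So `A_{k+1}(x,h)` is positive semidefinite iff `A_k(x',h)` is, its determinant is a positive
multiple of that of `A_k(x',h)`, and the recursion for `b` makes `x' - b(k,h)` a positive
multiple of `x - b(k+1,h)`. Iterating reduces `A_k(x,h)` to the `1 × 1` matrix `(f_k)`.
-/

open Matrix

noncomputable def hilbertShift (h n x : ℝ) : ℝ :=
  x * (n * h + 1) ^ 2 / (n * h) ^ 2 - (2 * n * h + 1) / (n * h) ^ 2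

/-- The paper's `f_k`: the shifts are applied with `n = k, k - 1, …, 1`. -/
noncomputable def hilbertChain (h : ℝ) : ℕ → ℝ → ℝ
  | 0, x => x
  | k + 1, x => hilbertChain h k (hilbertShift h ((k : ℝ) + 1) x)

lemma eq_hilbertChain {h x : ℝ} {k : ℕ} {f : ℕ → ℝ} (hf0 : f 0 = x)
    (hf : ∀ ℓ, ℓ < k → f (ℓ + 1) = hilbertShift h ((k : ℝ) - ℓ) (f ℓ)) :
    f k = hilbertChain h k x := by
  induction k generalizing x f with
  | zero => exact hf0
  | succ k ih =>
    refine ih (f := fun ℓ => f (ℓ + 1)) ?_ fun ℓ hℓ => ?_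
    · simpa [hf0] using hf 0 k.succ_pos
    · convert hf (ℓ + 1) (by omega) using 2
      push_cast
      ring

lemma hilbert_schur_entry {a b n h : ℝ} (ha : (a + n) * h + 1 ≠ 0)
    (hb : (b + n) * h + 1 ≠ 0) (hab : (a + b) * h + 1 ≠ 0) :
    1 / ((a + b) * h + 1) - 1 / ((a + n) * h + 1) * (2 * n * h + 1) * (1 / ((b + n) * h + 1))
      = (a - n) * h / ((a + n) * h + 1) * (1 / ((a + b) * h + 1))
          * ((b - n) * h / ((b + n) * h + 1)) := by
  rw [div_mul_div_comm, div_mul_div_comm, one_div_mul_eq_div, div_mul_div_comm,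
    div_sub_div _ _ hab (mul_ne_zero ha hb),
    div_eq_div_iff (mul_ne_zero hab (mul_ne_zero ha hb)) (mul_ne_zero (mul_ne_zero ha hab) hb)]
  ring

lemma hilbert_schur_corner {n h x : ℝ} (hn : n ≠ 0) (hh : h ≠ 0) (hnh : n * h + 1 ≠ 0) :
    x - 1 / (n * h + 1) * (2 * n * h + 1) * (1 / (n * h + 1))
      = -(n * h) / (n * h + 1) * hilbertShift h n x * (-(n * h) / (n * h + 1)) := by
  unfold hilbertShift
  field_simp

section SchurComplement

variable {h : ℝ} (k : ℕ)

noncomputable def hilbertColumn (h : ℝ) (k : ℕ) : Matrix (Fin (k + 1)) (Fin 1) ℝ :=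
  of fun i _ => 1 / (((i : ℝ) + ((k : ℝ) + 1)) * h + 1)

noncomputable def hilbertCorner (h : ℝ) (k : ℕ) : Matrix (Fin 1) (Fin 1) ℝ :=
  diagonal fun _ => 1 / (2 * ((k : ℝ) + 1) * h + 1)

noncomputable def hilbertScaling (h : ℝ) (k : ℕ) : Fin (k + 1) → ℝ :=
  fun i => ((i : ℝ) - ((k : ℝ) + 1)) * h / (((i : ℝ) + ((k : ℝ) + 1)) * h + 1)

lemma genHilbert_succ_submatrix (x : ℝ) :
    (genHilbert (k + 1) x h).submatrix finSumFinEquiv finSumFinEquiv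
      = fromBlocks (genHilbert k x h) (hilbertColumn h k) (hilbertColumn h k)ᴴ
          (hilbertCorner h k) := by
  ext (i | i) (j | j)
  · simp [genHilbert, Fin.ext_iff, -Fin.val_eq_zero_iff]
  · simp [genHilbert, hilbertColumn, Fin.ext_iff, -Fin.val_eq_zero_iff]
  · simp [genHilbert, hilbertColumn, Fin.ext_iff, -Fin.val_eq_zero_iff, add_comm]
  · simp [genHilbert, hilbertCorner, Fin.ext_iff, -Fin.val_eq_zero_iff, Subsingleton.elim i j]
    exact .inl (by ring)

lemma hilbertCorner_posDef (hh : 0 < h) : (hilbertCorner h k).PosDef :=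
  posDef_diagonal_iff.mpr fun _ => by positivity

lemma inv_hilbertCorner (hh : 0 < h) :
    (hilbertCorner h k)⁻¹ = diagonal fun _ => 2 * ((k : ℝ) + 1) * h + 1 := by
  refine inv_eq_right_inv ?_
  rw [hilbertCorner, diagonal_mul_diagonal, ← diagonal_one]
  congr with _
  field_simp

lemma isUnit_diagonal_hilbertScaling (hh : 0 < h) : IsUnit (diagonal (hilbertScaling h k)) := by
  refine isUnit_diagonal.mpr (Pi.isUnit_iff.mpr fun i => (div_ne_zero ?_ (by positivity)).isUnit)
  have : (i : ℝ) < (k : ℝ) + 1 := by exact_mod_cast i.isLt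
  exact mul_ne_zero (by linarith) hh.ne'

lemma genHilbert_schurComplement_eq (hh : 0 < h) (x : ℝ) :
    genHilbert k x h - hilbertColumn h k * (hilbertCorner h k)⁻¹ * (hilbertColumn h k)ᴴ
      = diagonal (hilbertScaling h k) * genHilbert k (hilbertShift h ((k : ℝ) + 1) x) h
          * diagonal (hilbertScaling h k) := by
  ext i j
  have hcol : (hilbertColumn h k * (hilbertCorner h k)⁻¹ * (hilbertColumn h k)ᴴ) i j
      = hilbertColumn h k i 0 * (2 * ((k : ℝ) + 1) * h + 1) * hilbertColumn h k j 0 := by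
    simp [inv_hilbertCorner k hh, mul_apply]
  rw [Matrix.sub_apply, hcol, mul_diagonal, diagonal_mul]
  simp only [genHilbert, hilbertColumn, hilbertScaling, of_apply]
  split_ifs with hij
  · obtain ⟨rfl, rfl⟩ := hij
    simp only [Fin.val_zero, Nat.cast_zero, zero_add, zero_sub, neg_mul]
    exact hilbert_schur_corner (by positivity) hh.ne' (by positivity)
  · exact hilbert_schur_entry (by positivity) (by positivity) (by positivity)

lemma genHilbert_succ_posSemidef_iff (hh : 0 < h) (x : ℝ) :
    (genHilbert (k + 1) x h).PosSemidef
      ↔ (genHilbert k (hilbertShift h ((k : ℝ) + 1) x) h).PosSemidef := by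
  have hD := hilbertCorner_posDef k hh
  let := hD.isUnit.invertible
  rw [← posSemidef_submatrix_equiv finSumFinEquiv, genHilbert_succ_submatrix,
    PosDef.fromBlocks₂₂ _ _ hD, genHilbert_schurComplement_eq k hh]
  have := (isUnit_diagonal_hilbertScaling k hh).posSemidef_star_right_conjugate_iff
    (x := genHilbert k (hilbertShift h ((k : ℝ) + 1) x) h)
  rwa [star_eq_conjTranspose, diagonal_conjTranspose, star_trivial] at this

lemma exists_det_genHilbert_succ (hh : 0 < h) (x : ℝ) :
    ∃ c > 0, (genHilbert (k + 1) x h).det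
      = c * (genHilbert k (hilbertShift h ((k : ℝ) + 1) x) h).det := by
  have hD := hilbertCorner_posDef k hh
  let := hD.isUnit.invertible
  have hE := (isUnit_iff_isUnit_det _).mp (isUnit_diagonal_hilbertScaling k hh)
  refine ⟨(hilbertCorner h k).det * (diagonal (hilbertScaling h k)).det ^ 2,
    mul_pos hD.det_pos (sq_pos_of_ne_zero hE.ne_zero), ?_⟩
  rw [← det_submatrix_equiv_self finSumFinEquiv, genHilbert_succ_submatrix, det_fromBlocks₂₂,
    invOf_eq_nonsing_inv, genHilbert_schurComplement_eq k hh, det_mul, det_mul]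
  ring

end SchurComplement

section Chain

lemma genHilbert_zero (x h : ℝ) : genHilbert 0 x h = diagonal fun _ => x := by
  ext i j
  fin_cases i; fin_cases j
  simp [genHilbert]

variable {h : ℝ}

lemma genHilbert_posSemidef_iff_hilbertChain_nonneg (hh : 0 < h) (k : ℕ) (x : ℝ) :
    (genHilbert k x h).PosSemidef ↔ 0 ≤ hilbertChain h k x := by
  induction k generalizing x with
  | zero => simp [genHilbert_zero, hilbertChain]
  | succ k ih => rw [genHilbert_succ_posSemidef_iff k hh, ih, hilbertChain]

lemma det_genHilbert_nonneg_iff_hilbertChain_nonneg (hh : 0 < h) (k : ℕ) (x : ℝ) :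
    0 ≤ (genHilbert k x h).det ↔ 0 ≤ hilbertChain h k x := by
  induction k generalizing x with
  | zero => simp [genHilbert_zero, hilbertChain]
  | succ k ih =>
    obtain ⟨c, hc, hdet⟩ := exists_det_genHilbert_succ k hh x
    rw [hdet, mul_nonneg_iff_of_pos_left hc, ih, hilbertChain]

lemma bGH_succ (hh : h ≠ 0) (k : ℕ) :
    bGH h (k + 1) = (bGH h k + (2 * ((k : ℝ) + 1) * h + 1) / (((k : ℝ) + 1) * h) ^ 2)
      * (((k : ℝ) + 1) * h / (((k : ℝ) + 1) * h + 1)) ^ 2 := by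
  cases k with
  | zero =>
    simp only [bGH, CharP.cast_eq_zero, zero_add, one_mul]
    field_simp
  | succ k =>
    rw [bGH]
    push_cast
    ring_nf

lemma bGH_succ_le_iff (hh : 0 < h) (k : ℕ) (x : ℝ) :
    bGH h (k + 1) ≤ x ↔ bGH h k ≤ hilbertShift h ((k : ℝ) + 1) x := by
  have ht : 0 < ((k : ℝ) + 1) * h := by positivity
  have hscale : 0 < ((((k : ℝ) + 1) * h + 1) / (((k : ℝ) + 1) * h)) ^ 2 := by positivity
  have key : hilbertShift h ((k : ℝ) + 1) x - bGH h k
      = (x - bGH h (k + 1)) * ((((k : ℝ) + 1) * h + 1) / (((k : ℝ) + 1) * h)) ^ 2 := by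
    rw [bGH_succ hh.ne', hilbertShift]
    field_simp
    ring
  rw [← sub_nonneg, ← sub_nonneg (b := bGH h k), key, mul_nonneg_iff_of_pos_right hscale]

lemma bGH_le_iff_hilbertChain_nonneg (hh : 0 < h) (k : ℕ) (x : ℝ) :
    bGH h k ≤ x ↔ 0 ≤ hilbertChain h k x := by
  induction k generalizing x with
  | zero => rfl
  | succ k ih => rw [bGH_succ_le_iff hh, ih, hilbertChain]

end Chain

theorem genHilbert_posSemidef_iff_general (x h : ℝ) (hh : 1 ≤ h)
    (k : ℕ)
    (f : ℕ → ℝ) (hf0 : f 0 = x)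
    (hf : ∀ ℓ, ℓ < k →
      f (ℓ + 1) = f ℓ * (((k : ℝ) - ℓ) * h + 1) ^ 2 / (((k : ℝ) - ℓ) * h) ^ 2
        - (2 * ((k : ℝ) - ℓ) * h + 1) / (((k : ℝ) - ℓ) * h) ^ 2) :
    ((genHilbert k x h).PosSemidef ↔ 0 ≤ (genHilbert k x h).det)
      ∧ (0 ≤ (genHilbert k x h).det ↔ 0 ≤ f k)
      ∧ (0 ≤ f k ↔ bGH h k ≤ x) := by
  have hpos : 0 < h := by linarith
  rw [genHilbert_posSemidef_iff_hilbertChain_nonneg hpos,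
    det_genHilbert_nonneg_iff_hilbertChain_nonneg hpos, bGH_le_iff_hilbertChain_nonneg hpos,
    eq_hilbertChain hf0 hf]
  exact ⟨.rfl, .rfl, .rfl⟩

theorem genHilbert_posSemidef_iff (x h : ℝ) (hx : 0 < x) (hh : 1 ≤ h)
    (k : ℕ) (hk : 1 ≤ k)
    (f : ℕ → ℝ) (hf0 : f 0 = x)
    (hf : ∀ ℓ, ℓ < k →
      f (ℓ + 1) = f ℓ * (((k : ℝ) - ℓ) * h + 1) ^ 2 / (((k : ℝ) - ℓ) * h) ^ 2
        - (2 * ((k : ℝ) - ℓ) * h + 1) / (((k : ℝ) - ℓ) * h) ^ 2) :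
    ((genHilbert k x h).PosSemidef ↔ 0 ≤ (genHilbert k x h).det)
      ∧ (0 ≤ (genHilbert k x h).det ↔ 0 ≤ f k)
      ∧ (0 ≤ f k ↔ bGH h k ≤ x) :=
  genHilbert_posSemidef_iff_general x h hh k f hf0 hf
end

section
/- For every real h ≥ 1 and every integer k ≥ 1, b(k,h) ≤ b(k,1) = k(k+2)/(k+1)^2. -/
lemma bGH_key (x b : ℝ) (hx : 0 < x) :
    (b + (2 * x + 1) / x ^ 2) * (x / (x + 1)) ^ 2 = 1 - (1 - b) * (x / (x + 1)) ^ 2 := by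
  have h1 : x ≠ 0 := ne_of_gt hx
  have h2 : x + 1 ≠ 0 := by positivity
  field_simp
  ring

theorem bGH_le_bGH_one (h : ℝ) (hh : 1 ≤ h) (k : ℕ) (hk : 1 ≤ k) :
    bGH h k ≤ bGH 1 k ∧ bGH 1 k = (k : ℝ) * ((k : ℝ) + 2) / ((k : ℝ) + 1) ^ 2 := by
  have hh0 : (0:ℝ) < h := by linarith
  induction k, hk using Nat.le_induction with
  | base =>
      constructor
      · show (2 * h + 1) / (h + 1) ^ 2 ≤ (2 * 1 + 1) / ((1:ℝ) + 1) ^ 2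
        rw [div_le_div_iff₀ (by positivity) (by norm_num)]
        nlinarith
      · show (2 * 1 + 1) / ((1:ℝ) + 1) ^ 2 = _
        norm_num
  | succ k hk ih =>
      obtain ⟨j, rfl⟩ : ∃ j, k = j + 1 := ⟨k - 1, (Nat.succ_pred_eq_of_pos hk).symm⟩
      obtain ⟨ihle, iheq⟩ := ih
      set m : ℝ := (j : ℝ) + 2 with hm
      have hm2 : (2:ℝ) ≤ m := by have : (0:ℝ) ≤ (j:ℝ) := Nat.cast_nonneg j; linarith
      have hxpos : 0 < m * h := by nlinarith
      have hypos : 0 < m * 1 := by nlinarith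
      have ehx : bGH h (j + 2) = 1 - (1 - bGH h (j + 1)) * (m * h / (m * h + 1)) ^ 2 := by
        rw [show bGH h (j+2) = (bGH h (j + 1) + (2 * m * h + 1) / ((m * h) ^ 2)) *
            ((m * h) / (m * h + 1)) ^ 2 from rfl, mul_assoc 2 m h, bGH_key _ _ hxpos]
      have ehy : bGH 1 (j + 2) = 1 - (1 - bGH 1 (j + 1)) * (m * 1 / (m * 1 + 1)) ^ 2 := by
        rw [show bGH 1 (j+2) = (bGH 1 (j + 1) + (2 * m * 1 + 1) / ((m * 1) ^ 2)) *
            ((m * 1) / (m * 1 + 1)) ^ 2 from rfl, mul_assoc 2 m 1, bGH_key _ _ hypos]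
      have hb1 : (1:ℝ) - bGH 1 (j + 1) = 1 / ((j:ℝ) + 2) ^ 2 := by
        rw [iheq]
        have : ((j:ℝ) + 1 + 1) ≠ 0 := by positivity
        push_cast
        field_simp
        ring
      have hb1nn : (0:ℝ) ≤ 1 - bGH 1 (j + 1) := by rw [hb1]; positivity
      have hbhnn : (0:ℝ) ≤ 1 - bGH h (j + 1) := by linarith
      constructor
      · rw [ehx, ehy]
        have hfrac : m * 1 / (m * 1 + 1) ≤ m * h / (m * h + 1) := by
          rw [div_le_div_iff₀ (by positivity) (by positivity)]
          nlinarith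
        have hsq : (m * 1 / (m * 1 + 1)) ^ 2 ≤ (m * h / (m * h + 1)) ^ 2 :=
          pow_le_pow_left₀ (by positivity) hfrac 2
        have := mul_le_mul (le_refl (1 - bGH h (j+1))) hsq (by positivity) hbhnn
        nlinarith [mul_le_mul_of_nonneg_right (show 1 - bGH 1 (j+1) ≤ 1 - bGH h (j+1) by linarith)
          (show (0:ℝ) ≤ (m * 1 / (m * 1 + 1)) ^ 2 by positivity)]
      · rw [ehy, hb1]
        have h1 : ((j:ℝ) + 2) ≠ 0 := by positivity
        have h2 : m * 1 + 1 ≠ 0 := by positivity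
        push_cast
        rw [hm]
        field_simp
        ring
end

section
/- For every integer k ≥ 1, F(√(1/2), k) = √(2(k+1)^2/(3k^2+6k+2)) = √(2/(2+b(k,1))), and moreover F(√(1/2), k) ≤ √(2/(2+b(k,h))) for every real h ≥ 1. -/
/-- The function `F(a,k)` of Theorem 4.7. -/
noncomputable def FCY (a : ℝ) (k : ℕ) : ℝ :=
  Real.sqrt ((((k : ℝ) + 1) ^ 2 / (2 * (k : ℝ) * ((k : ℝ) + 2)) - a ^ 2) /
    (a ^ 4 - (5 / 2) * a ^ 2 + ((k : ℝ) + 1) ^ 2 / (2 * (k : ℝ) * ((k : ℝ) + 2))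
      + (2 * (k : ℝ) ^ 2 + 4 * (k : ℝ) + 3) / (4 * ((k : ℝ) + 1) ^ 2)))

lemma bGH_step (h : ℝ) (hh : 0 < h) (j : ℕ) :
    1 - bGH h (j + 2) = (1 - bGH h (j + 1)) * ((((j:ℝ)+2)*h) / (((j:ℝ)+2)*h + 1))^2 := by
  have hc : ((j:ℝ)+2)*h > 0 := by positivity
  have hc1 : ((j:ℝ)+2)*h + 1 > 0 := by positivity
  rw [bGH]
  field_simp
  ring

lemma bGH_one : ∀ k : ℕ, bGH 1 ((k:ℕ) + 1) = ((k:ℝ)+1)*((k:ℝ)+3)/((k:ℝ)+2)^2 := by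
  intro k
  induction k with
  | zero => simp [bGH]; norm_num
  | succ n ih =>
      have h2 : ((n:ℝ)+2) > 0 := by positivity
      have h3 : ((n:ℝ)+3) > 0 := by positivity
      rw [show n + 1 + 1 = n + 2 from rfl, bGH, ih]
      push_cast
      field_simp
      ring

lemma bGH_mono (h : ℝ) (hh : 1 ≤ h) :
    ∀ k : ℕ, (1 - bGH 1 (k+1) ≤ 1 - bGH h (k+1)) ∧ (1 - bGH h (k+1) ≤ 1) := by
  have h0 : 0 < h := lt_of_lt_of_le one_pos hh
  intro k
  induction k with
  | zero =>
      constructor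
      · have e1 : 1 - bGH 1 1 = (1/2:ℝ)^2 := by simp [bGH]; norm_num
        have e2 : 1 - bGH h 1 = (h/(h+1))^2 := by
          have : h + 1 > 0 := by positivity
          simp only [bGH]; field_simp; ring
        rw [e1, e2]
        have : (1/2:ℝ) ≤ h/(h+1) := by
          rw [div_le_div_iff₀ (by norm_num) (by positivity)]; linarith
        nlinarith [this]
      · have e2 : 1 - bGH h 1 = (h/(h+1))^2 := by
          have : h + 1 > 0 := by positivity
          simp only [bGH]; field_simp; ring
        rw [e2]
        have : h/(h+1) ≤ 1 := by rw [div_le_one (by positivity)]; linarith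
        nlinarith [this, div_nonneg h0.le (by positivity : (0:ℝ) ≤ h+1)]
  | succ n ih =>
      obtain ⟨ih1, ih2⟩ := ih
      have hb1 : 0 ≤ 1 - bGH 1 (n+1) := by
        rw [bGH_one n]
        have h2 : ((n:ℝ)+2) > 0 := by positivity
        have : ((n:ℝ)+1)*((n:ℝ)+3)/((n:ℝ)+2)^2 ≤ 1 := by
          rw [div_le_one (by positivity)]; nlinarith
        linarith
      have hbh : 0 ≤ 1 - bGH h (n+1) := le_trans hb1 ih1
      have hs1 := bGH_step 1 one_pos n
      have hsh := bGH_step h h0 n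
      have hc : (0:ℝ) < ((n:ℝ)+2)*h := by positivity
      have hth : (0:ℝ) ≤ (((n:ℝ)+2)*h / (((n:ℝ)+2)*h + 1))^2 := by positivity
      have hth1 : (((n:ℝ)+2)*h / (((n:ℝ)+2)*h + 1))^2 ≤ 1 := by
        have : ((n:ℝ)+2)*h / (((n:ℝ)+2)*h + 1) ≤ 1 := by
          rw [div_le_one (by positivity)]; linarith
        nlinarith [div_nonneg hc.le (by positivity : (0:ℝ) ≤ ((n:ℝ)+2)*h+1)]
      have htmono : (((n:ℝ)+2)*1 / (((n:ℝ)+2)*1 + 1))^2 ≤ (((n:ℝ)+2)*h / (((n:ℝ)+2)*h + 1))^2 := by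
        have hd : ((n:ℝ)+2)*1 / (((n:ℝ)+2)*1 + 1) ≤ ((n:ℝ)+2)*h / (((n:ℝ)+2)*h + 1) := by
          rw [div_le_div_iff₀ (by positivity) (by positivity)]
          nlinarith
        have hnn : (0:ℝ) ≤ ((n:ℝ)+2)*1 / (((n:ℝ)+2)*1 + 1) := by positivity
        nlinarith
      constructor
      · rw [show n+1+1 = n+2 from rfl, hs1, hsh]
        calc (1 - bGH 1 (n+1)) * (((n:ℝ)+2)*1 / (((n:ℝ)+2)*1 + 1))^2
            ≤ (1 - bGH 1 (n+1)) * (((n:ℝ)+2)*h / (((n:ℝ)+2)*h + 1))^2 :=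
              mul_le_mul_of_nonneg_left htmono hb1
          _ ≤ (1 - bGH h (n+1)) * (((n:ℝ)+2)*h / (((n:ℝ)+2)*h + 1))^2 :=
              mul_le_mul_of_nonneg_right ih1 hth
      · rw [show n+1+1 = n+2 from rfl, hsh]
        calc (1 - bGH h (n+1)) * (((n:ℝ)+2)*h / (((n:ℝ)+2)*h + 1))^2
            ≤ 1 * (((n:ℝ)+2)*h / (((n:ℝ)+2)*h + 1))^2 := mul_le_mul_of_nonneg_right ih2 hth
          _ ≤ 1 := by nlinarith

lemma FCY_key (x : ℝ) (hx : 1 ≤ x) :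
    ((x + 1) ^ 2 / (2 * x * (x + 2)) - 1 / 2) /
      (1 / 4 - 5 / 2 * (1 / 2) + (x + 1) ^ 2 / (2 * x * (x + 2))
        + (2 * x ^ 2 + 4 * x + 3) / (4 * (x + 1) ^ 2))
      = 2 * (x + 1) ^ 2 / (3 * x ^ 2 + 6 * x + 2) := by
  have hx0 : 0 < x := lt_of_lt_of_le one_pos hx
  have h2 : (0:ℝ) < x + 2 := by linarith
  have h1 : (0:ℝ) < x + 1 := by linarith
  have h3 : (0:ℝ) < 3 * x ^ 2 + 6 * x + 2 := by positivity
  have hnum : (x + 1) ^ 2 / (2 * x * (x + 2)) - 1 / 2 = 1 / (2 * x * (x + 2)) := by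
    field_simp
    ring
  have hden : 1 / 4 - 5 / 2 * (1 / 2) + (x + 1) ^ 2 / (2 * x * (x + 2))
        + (2 * x ^ 2 + 4 * x + 3) / (4 * (x + 1) ^ 2)
      = (3 * x ^ 2 + 6 * x + 2) / (4 * x * (x + 2) * (x + 1) ^ 2) := by
    field_simp
    ring
  rw [hnum, hden, div_div_div_comm]
  field_simp
  ring

theorem FCY_sqrt_half (k : ℕ) (hk : 1 ≤ k) :
    FCY (Real.sqrt (1 / 2)) k
        = Real.sqrt (2 * ((k : ℝ) + 1) ^ 2 / (3 * (k : ℝ) ^ 2 + 6 * (k : ℝ) + 2))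
      ∧ Real.sqrt (2 * ((k : ℝ) + 1) ^ 2 / (3 * (k : ℝ) ^ 2 + 6 * (k : ℝ) + 2))
        = Real.sqrt (2 / (2 + bGH 1 k))
      ∧ ∀ h : ℝ, 1 ≤ h →
          FCY (Real.sqrt (1 / 2)) k ≤ Real.sqrt (2 / (2 + bGH h k)) := by
  obtain ⟨m, rfl⟩ : ∃ m, k = m + 1 := ⟨k - 1, (Nat.succ_pred_eq_of_pos hk).symm⟩
  have h1 : Real.sqrt (1/2) ^ 2 = 1/2 := Real.sq_sqrt (by norm_num)
  have h2 : Real.sqrt (1/2) ^ 4 = 1/4 := by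
    rw [show 4 = 2*2 from rfl, pow_mul, h1]; norm_num
  have hm0 : (0:ℝ) ≤ (m:ℝ) := Nat.cast_nonneg m
  have e1 : FCY (Real.sqrt (1/2)) (m+1)
      = Real.sqrt (2 * ((↑(m+1):ℝ) + 1)^2 / (3 * (↑(m+1):ℝ)^2 + 6 * (↑(m+1):ℝ) + 2)) := by
    rw [FCY, h1, h2]
    congr 1
    exact FCY_key ((m+1 : ℕ) : ℝ) (by push_cast; linarith)
  have hbone : bGH 1 (m+1) = ((m:ℝ)+1)*((m:ℝ)+3)/((m:ℝ)+2)^2 := bGH_one m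
  have e2 : (2 * ((↑(m+1):ℝ) + 1)^2 / (3 * (↑(m+1):ℝ)^2 + 6 * (↑(m+1):ℝ) + 2))
      = 2 / (2 + bGH 1 (m+1)) := by
    rw [hbone]
    push_cast
    have d2 : ((m:ℝ)+2) ≠ 0 := by positivity
    have d3 : (3 * ((m:ℝ)+1)^2 + 6 * ((m:ℝ)+1) + 2) ≠ 0 := by positivity
    have d4 : 2 + ((m:ℝ)+1)*((m:ℝ)+3)/((m:ℝ)+2)^2 ≠ 0 := by
      have : ((m:ℝ)+1)*((m:ℝ)+3)/((m:ℝ)+2)^2 ≥ 0 := by positivity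
      linarith
    field_simp
    ring
  refine ⟨e1, by rw [e2], ?_⟩
  intro h hh
  obtain ⟨hmle, hle1⟩ := bGH_mono h hh m
  have hb1nn : 0 ≤ bGH h (m+1) := by linarith
  have hble : bGH h (m+1) ≤ bGH 1 (m+1) := by linarith
  rw [e1, e2]
  apply Real.sqrt_le_sqrt
  apply div_le_div_of_nonneg_left (by norm_num) (by linarith) (by linarith)
end

section
/- For every integer h ≥ 1, the sequence k ↦ b(k,h) is nondecreasing in k, and lim_{k→∞} b(k,h) = 1. -/
open Filter Finset

lemma one_add_sum_le_prod_aux (s : Finset ℕ) (a : ℕ → ℝ) (ha : ∀ i, 0 ≤ a i) :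
    1 + ∑ i ∈ s, a i ≤ ∏ i ∈ s, (1 + a i) := by
  classical
  induction s using Finset.induction_on with
  | empty => simp
  | @insert j s hj ih =>
    rw [Finset.sum_insert hj, Finset.prod_insert hj]
    have hs : 0 ≤ ∑ i ∈ s, a i := Finset.sum_nonneg fun i _ => ha i
    nlinarith [ha j, ih]

lemma bGH_closed (h : ℝ) (hp : 0 < h) (k : ℕ) (hk : 1 ≤ k) :
    bGH h k = 1 - ∏ i ∈ Finset.Icc 1 k, (((i : ℝ) * h) / ((i : ℝ) * h + 1)) ^ 2 := by
  induction k with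
  | zero => omega
  | succ n ih =>
    rcases Nat.lt_or_ge n 1 with hn | hn
    · interval_cases n
      have h1 : (h + 1) ≠ 0 := by positivity
      simp [bGH]
      field_simp
      ring
    · obtain ⟨m, rfl⟩ : ∃ m, n = m + 1 := ⟨n - 1, by omega⟩
      have key := ih (by omega)
      have hx : ((m : ℝ) + 2) * h ≠ 0 := by positivity
      have hx1 : ((m : ℝ) + 2) * h + 1 ≠ 0 := by positivity
      have hprod : ∏ i ∈ Finset.Icc 1 (m + 2), (((i : ℝ) * h) / ((i : ℝ) * h + 1)) ^ 2
          = (∏ i ∈ Finset.Icc 1 (m + 1), (((i : ℝ) * h) / ((i : ℝ) * h + 1)) ^ 2) *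
            ((((m : ℝ) + 2) * h) / (((m : ℝ) + 2) * h + 1)) ^ 2 := by
        rw [Finset.prod_Icc_succ_top (by omega)]
        push_cast
        congr 2
        ring_nf
      show bGH h (m + 2) = _
      rw [bGH, key, hprod]
      field_simp
      ring

theorem bGH_monotone_tendsto_one (h : ℕ) (hh : 1 ≤ h) :
    (∀ k : ℕ, 1 ≤ k → bGH (h : ℝ) k ≤ bGH (h : ℝ) (k + 1))
      ∧ Tendsto (fun k : ℕ => bGH (h : ℝ) k) atTop (nhds 1) := by
  have hp : (0 : ℝ) < (h : ℝ) := by exact_mod_cast Nat.lt_of_lt_of_le Nat.zero_lt_one hh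
  set H : ℝ := (h : ℝ) with hH
  -- the product
  set Q : ℕ → ℝ := fun k => ∏ i ∈ Finset.Icc 1 k, (((i : ℝ) * H) / ((i : ℝ) * H + 1)) ^ 2
    with hQ
  have hden : ∀ i : ℕ, (0 : ℝ) < (i : ℝ) * H + 1 := fun i => by positivity
  have hfac_nonneg : ∀ i : ℕ, (0 : ℝ) ≤ (((i : ℝ) * H) / ((i : ℝ) * H + 1)) ^ 2 :=
    fun i => by positivity
  have hfac_le_one : ∀ i : ℕ, (((i : ℝ) * H) / ((i : ℝ) * H + 1)) ^ 2 ≤ 1 := fun i => by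
    have h1 : ((i : ℝ) * H) / ((i : ℝ) * H + 1) ≤ 1 :=
      div_le_one_of_le₀ (by linarith) (hden i).le
    have h0 : (0 : ℝ) ≤ ((i : ℝ) * H) / ((i : ℝ) * H + 1) :=
      div_nonneg (by positivity) (hden i).le
    nlinarith
  have hQ_nonneg : ∀ k, 0 ≤ Q k := fun k =>
    Finset.prod_nonneg fun i _ => hfac_nonneg i
  have hQ_anti : ∀ k, Q (k + 1) ≤ Q k := by
    intro k
    have : Q (k + 1) = Q k * (((k + 1 : ℕ) : ℝ) * H / (((k + 1 : ℕ) : ℝ) * H + 1)) ^ 2 := by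
      simp only [hQ]
      rw [Finset.prod_Icc_succ_top (by omega)]
    rw [this]
    calc Q k * _ ≤ Q k * 1 :=
          mul_le_mul_of_nonneg_left (hfac_le_one _) (hQ_nonneg k)
      _ = Q k := mul_one _
  constructor
  · intro k hk
    rw [bGH_closed H hp k hk, bGH_closed H hp (k + 1) (by omega)]
    have := hQ_anti k
    simp only [hQ] at this
    linarith
  · -- Q tends to 0
    have hQ_le : ∀ k, Q k ≤ (1 + ∑ i ∈ Finset.Icc 1 k, 1 / ((i : ℝ) * H))⁻¹ := by
      intro k
      have step1 : Q k ≤ ∏ i ∈ Finset.Icc 1 k, (((i : ℝ) * H) / ((i : ℝ) * H + 1)) := by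
        apply Finset.prod_le_prod (fun i _ => hfac_nonneg i)
        intro i hi
        have h1 : ((i : ℝ) * H) / ((i : ℝ) * H + 1) ≤ 1 :=
          div_le_one_of_le₀ (by linarith [hden i]) (hden i).le
        have h0 : (0 : ℝ) ≤ ((i : ℝ) * H) / ((i : ℝ) * H + 1) :=
          div_nonneg (by positivity) (hden i).le
        nlinarith
      have step2 : ∏ i ∈ Finset.Icc 1 k, (((i : ℝ) * H) / ((i : ℝ) * H + 1))
          = (∏ i ∈ Finset.Icc 1 k, (1 + 1 / ((i : ℝ) * H)))⁻¹ := by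
        rw [← Finset.prod_inv_distrib]
        apply Finset.prod_congr rfl
        intro i hi
        have hi1 : 1 ≤ i := (Finset.mem_Icc.mp hi).1
        have hiH : (0 : ℝ) < (i : ℝ) * H := by
          have : (0:ℝ) < (i : ℝ) := by exact_mod_cast hi1
          positivity
        rw [inv_eq_one_div]
        field_simp
      have step3 : (∏ i ∈ Finset.Icc 1 k, (1 + 1 / ((i : ℝ) * H)))⁻¹
          ≤ (1 + ∑ i ∈ Finset.Icc 1 k, 1 / ((i : ℝ) * H))⁻¹ := by
        apply inv_anti₀
        · have : (0:ℝ) ≤ ∑ i ∈ Finset.Icc 1 k, 1 / ((i : ℝ) * H) :=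
            Finset.sum_nonneg fun i _ => by positivity
          linarith
        · exact one_add_sum_le_prod_aux _ _ fun i => by positivity
      calc Q k ≤ _ := step1
        _ = _ := step2
        _ ≤ _ := step3
    -- the sum tends to infinity
    have hsum : Tendsto (fun k : ℕ => ∑ i ∈ Finset.Icc 1 k, 1 / ((i : ℝ) * H)) atTop atTop := by
      have hrw : ∀ k : ℕ, ∑ i ∈ Finset.Icc 1 k, 1 / ((i : ℝ) * H)
          = (1 / H) * ∑ i ∈ Finset.range k, 1 / ((i : ℝ) + 1) := by
        intro k
        rw [Finset.mul_sum]
        rw [show Finset.Icc 1 k = Finset.Ico 1 (k + 1) by rfl, Finset.sum_Ico_eq_sum_range]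
        simp only [Nat.add_sub_cancel]
        apply Finset.sum_congr rfl
        intro i hi
        push_cast
        rw [one_div, one_div, one_div, mul_comm]
        rw [mul_inv]
        ring_nf
      have := (Real.tendsto_sum_range_one_div_nat_succ_atTop).const_mul_atTop
        (show (0:ℝ) < 1 / H by positivity)
      refine this.congr fun k => (hrw k).symm
    have hinv : Tendsto (fun k : ℕ => (1 + ∑ i ∈ Finset.Icc 1 k, 1 / ((i : ℝ) * H))⁻¹)
        atTop (nhds 0) :=
      tendsto_inv_atTop_zero.comp (tendsto_atTop_add_const_left _ 1 hsum)
    have hQ0 : Tendsto Q atTop (nhds 0) :=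
      tendsto_of_tendsto_of_tendsto_of_le_of_le tendsto_const_nhds hinv hQ_nonneg hQ_le
    have : Tendsto (fun k => 1 - Q k) atTop (nhds 1) := by
      have h1 : Tendsto (fun _ : ℕ => (1:ℝ)) atTop (nhds 1) := tendsto_const_nhds
      simpa using h1.sub hQ0
    refine this.congr' ?_
    filter_upwards [eventually_ge_atTop 1] with k hk
    rw [bGH_closed H hp k hk]
end

section
/- Let 0 < a ≤ 1, 0 < q < 1 and y > 0. The 3×3 real symmetric matrix H := [[1, q, y^2], [q, q, a^2 y^2], [y^2, a^2 y^2, y^2]] is positive semidefinite if and only if y ≤ m_1(a,q) := √( q(1−q) / ((a^2−q)^2 + q(1−q)) ). -/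
/-!
Completing the square in the first coordinate reduces the quadratic form of `H` to the binary
form with coefficients `q(1-q)`, `y²(a²-q)`, `y²(1-y²)` (the Schur complement of the corner
entry `1`). A binary form `A u² + 2B uv + C v²` with `A > 0` is nonnegative iff `B² ≤ AC`;
here that reads `y⁴(a²-q)² ≤ q(1-q) y²(1-y²)`, i.e. `y² ((a²-q)² + q(1-q)) ≤ q(1-q)`.
-/

open Matrix

lemma binary_quadForm_nonneg_iff {A B C : ℝ} (hA : 0 < A) :
    (∀ u v : ℝ, 0 ≤ A * u ^ 2 + 2 * B * u * v + C * v ^ 2) ↔ B ^ 2 ≤ A * C := by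
  constructor
  · intro h
    have := h (-B) A
    nlinarith
  · intro h u v
    have hsq : A * (A * u ^ 2 + 2 * B * u * v + C * v ^ 2)
        = (A * u + B * v) ^ 2 + (A * C - B ^ 2) * v ^ 2 := by ring
    rw [← mul_nonneg_iff_of_pos_left hA, hsq]
    exact add_nonneg (sq_nonneg _) (mul_nonneg (sub_nonneg.2 h) (sq_nonneg v))

lemma dotProduct_mulVec_three_eq_sq_add (b c d e f : ℝ) (x : Fin 3 → ℝ) :
    star x ⬝ᵥ (!![1, b, c; b, d, e; c, e, f] *ᵥ x)
      = (x 0 + b * x 1 + c * x 2) ^ 2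
        + ((d - b ^ 2) * x 1 ^ 2 + 2 * (e - b * c) * x 1 * x 2 + (f - c ^ 2) * x 2 ^ 2) := by
  simp only [dotProduct, Pi.star_apply, star_trivial, mulVec, of_apply, cons_val', cons_val_fin_one,
    Fin.sum_univ_three, Fin.isValue, cons_val_zero, cons_val_one, cons_val, one_mul]
  ring

lemma posSemidef_three_iff_schur (b c d e f : ℝ) :
    PosSemidef !![1, b, c; b, d, e; c, e, f]
      ↔ ∀ u v : ℝ, 0 ≤ (d - b ^ 2) * u ^ 2 + 2 * (e - b * c) * u * v + (f - c ^ 2) * v ^ 2 := by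
  constructor
  · intro h u v
    have := h.dotProduct_mulVec_nonneg ![-(b * u + c * v), u, v]
    rw [dotProduct_mulVec_three_eq_sq_add] at this
    simpa using this
  · intro h
    refine PosSemidef.of_dotProduct_mulVec_nonneg ?_ fun x => ?_
    · ext i j
      fin_cases i <;> fin_cases j <;> simp
    · rw [dotProduct_mulVec_three_eq_sq_add]
      exact add_nonneg (sq_nonneg _) (h _ _)

theorem sixPointTest_H_posSemidef_iff_general (a q y : ℝ)
    (hq0 : 0 < q) (hq1 : q < 1) (hy : 0 < y) :
    (Matrix.PosSemidef
      !![1, q, y ^ 2;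
         q, q, a ^ 2 * y ^ 2;
         y ^ 2, a ^ 2 * y ^ 2, y ^ 2])
      ↔ y ≤ Real.sqrt (q * (1 - q) / ((a ^ 2 - q) ^ 2 + q * (1 - q))) := by
  have hA : 0 < q * (1 - q) := mul_pos hq0 (by linarith)
  have hD : 0 < (a ^ 2 - q) ^ 2 + q * (1 - q) := by positivity
  have hdiscr : (q - q ^ 2) * (y ^ 2 - (y ^ 2) ^ 2) - (a ^ 2 * y ^ 2 - q * y ^ 2) ^ 2
      = y ^ 2 * (q * (1 - q) - y ^ 2 * ((a ^ 2 - q) ^ 2 + q * (1 - q))) := by ring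
  rw [posSemidef_three_iff_schur, binary_quadForm_nonneg_iff (by linarith), ← sub_nonneg, hdiscr,
    mul_nonneg_iff_of_pos_left (by positivity), sub_nonneg, Real.le_sqrt' hy, le_div_iff₀ hD,
    mul_comm]

theorem sixPointTest_H_posSemidef_iff (a q y : ℝ)
    (ha0 : 0 < a) (ha1 : a ≤ 1) (hq0 : 0 < q) (hq1 : q < 1) (hy : 0 < y) :
    (Matrix.PosSemidef
      !![1, q, y ^ 2;
         q, q, a ^ 2 * y ^ 2;
         y ^ 2, a ^ 2 * y ^ 2, y ^ 2])
      ↔ y ≤ Real.sqrt (q * (1 - q) / ((a ^ 2 - q) ^ 2 + q * (1 - q))) :=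
  sixPointTest_H_posSemidef_iff_general a q y hq0 hq1 hy
end

section
/- Let 0 < a ≤ 1, 0 < q < 1 and y > 0. The 5×5 real symmetric matrix P with rows (1, q, y^2, q, a^2y^2), (q, q, a^2y^2, q, a^2y^2), (y^2, a^2y^2, y^2, a^2y^2, a^2y^2), (q, q, a^2y^2, q, a^2y^2), (a^2y^2, a^2y^2, a^2y^2, a^2y^2, a^2y^2) is positive semidefinite if and only if both (1−a^2)y^2 ≤ 1−q and a^2 y^2 ≤ q. -/
/-!
Writing `s = a²y²`, the quadratic form of `P` is the sum of squares
`s (x₀ + ⋯ + x₄)² + (q - s)(x₀ + x₁ + x₃)² + (1 - a²)y²(x₀ + x₂)² + (1 - q - (1 - a²)y²) x₀²`.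
Since `a² ≤ 1`, the two stated inequalities make every coefficient nonnegative; conversely the
vectors `(1, -1, -1, 0, 1)` and `(0, 1, 0, 0, -1)` kill all squares but one and isolate the
coefficients `1 - q - (1 - a²)y²` and `q - s`.
-/

open Matrix

abbrev fifteenPointP (a q y : ℝ) : Matrix (Fin 5) (Fin 5) ℝ :=
  !![1, q, y ^ 2, q, a ^ 2 * y ^ 2;
     q, q, a ^ 2 * y ^ 2, q, a ^ 2 * y ^ 2;
     y ^ 2, a ^ 2 * y ^ 2, y ^ 2, a ^ 2 * y ^ 2, a ^ 2 * y ^ 2;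
     q, q, a ^ 2 * y ^ 2, q, a ^ 2 * y ^ 2;
     a ^ 2 * y ^ 2, a ^ 2 * y ^ 2, a ^ 2 * y ^ 2, a ^ 2 * y ^ 2, a ^ 2 * y ^ 2]

theorem fifteenPointP_isHermitian (a q y : ℝ) : (fifteenPointP a q y).IsHermitian := by
  ext i j
  fin_cases i <;> fin_cases j <;> simp

theorem dotProduct_fifteenPointP_mulVec (a q y : ℝ) (x : Fin 5 → ℝ) :
    x ⬝ᵥ fifteenPointP a q y *ᵥ x =
      a ^ 2 * y ^ 2 * (x 0 + x 1 + x 2 + x 3 + x 4) ^ 2 + (q - a ^ 2 * y ^ 2) * (x 0 + x 1 + x 3) ^ 2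
        + (1 - a ^ 2) * y ^ 2 * (x 0 + x 2) ^ 2 + (1 - q - (1 - a ^ 2) * y ^ 2) * x 0 ^ 2 := by
  simp only [dotProduct, mulVec, Fin.sum_univ_five, of_apply, cons_val', cons_val_fin_one,
    cons_val_zero, cons_val_one, cons_val]
  ring

theorem fifteenPointTest_P_posSemidef_iff_general (a q y : ℝ)
    (ha0 : 0 < a) (ha1 : a ≤ 1) :
    (Matrix.PosSemidef
      !![1, q, y ^ 2, q, a ^ 2 * y ^ 2;
         q, q, a ^ 2 * y ^ 2, q, a ^ 2 * y ^ 2;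
         y ^ 2, a ^ 2 * y ^ 2, y ^ 2, a ^ 2 * y ^ 2, a ^ 2 * y ^ 2;
         q, q, a ^ 2 * y ^ 2, q, a ^ 2 * y ^ 2;
         a ^ 2 * y ^ 2, a ^ 2 * y ^ 2, a ^ 2 * y ^ 2, a ^ 2 * y ^ 2, a ^ 2 * y ^ 2])
      ↔ ((1 - a ^ 2) * y ^ 2 ≤ 1 - q ∧ a ^ 2 * y ^ 2 ≤ q) := by
  change (fifteenPointP a q y).PosSemidef ↔ _
  simp only [posSemidef_iff_dotProduct_mulVec, star_trivial, dotProduct_fifteenPointP_mulVec]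
  constructor
  · rintro ⟨-, hform⟩
    have h₁ := hform ![1, -1, -1, 0, 1]
    have h₂ := hform ![0, 1, 0, 0, -1]
    simp only [cons_val] at h₁ h₂
    norm_num at h₁ h₂
    exact ⟨by linarith, by linarith⟩
  · rintro ⟨h₁, h₂⟩
    refine ⟨fifteenPointP_isHermitian a q y, fun x => ?_⟩
    have ha : 0 ≤ 1 - a ^ 2 := by nlinarith
    have := mul_nonneg (sub_nonneg.2 h₂) (sq_nonneg (x 0 + x 1 + x 3))
    have := mul_nonneg (mul_nonneg ha (sq_nonneg y)) (sq_nonneg (x 0 + x 2))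
    have := mul_nonneg (sub_nonneg.2 h₁) (sq_nonneg (x 0))
    have : 0 ≤ a ^ 2 * y ^ 2 * (x 0 + x 1 + x 2 + x 3 + x 4) ^ 2 := by positivity
    linarith

theorem fifteenPointTest_P_posSemidef_iff (a q y : ℝ)
    (ha0 : 0 < a) (ha1 : a ≤ 1) (hq0 : 0 < q) (hq1 : q < 1) (hy : 0 < y) :
    (Matrix.PosSemidef
      !![1, q, y ^ 2, q, a ^ 2 * y ^ 2;
         q, q, a ^ 2 * y ^ 2, q, a ^ 2 * y ^ 2;
         y ^ 2, a ^ 2 * y ^ 2, y ^ 2, a ^ 2 * y ^ 2, a ^ 2 * y ^ 2;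
         q, q, a ^ 2 * y ^ 2, q, a ^ 2 * y ^ 2;
         a ^ 2 * y ^ 2, a ^ 2 * y ^ 2, a ^ 2 * y ^ 2, a ^ 2 * y ^ 2, a ^ 2 * y ^ 2])
      ↔ ((1 - a ^ 2) * y ^ 2 ≤ 1 - q ∧ a ^ 2 * y ^ 2 ≤ q) :=
  fifteenPointTest_P_posSemidef_iff_general a q y ha0 ha1
end

section
/- For every real a with 0 < a ≤ √(1/2), one has h_2(a) < h_2^{(2,1)}(a), where h_2(a) := √( 9(9−16a^2) / (157−360a^2+144a^4) ) and h_2^{(2,1)}(a) := √( 225(15−28a^2) / (6238−15015a^2+6300a^4) ). -/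
theorem h2_lt_h2_pow21 (a : ℝ) (ha0 : 0 < a) (ha1 : a ≤ Real.sqrt (1 / 2)) :
    Real.sqrt (9 * (9 - 16 * a ^ 2) / (157 - 360 * a ^ 2 + 144 * a ^ 4))
      < Real.sqrt (225 * (15 - 28 * a ^ 2) /
          (6238 - 15015 * a ^ 2 + 6300 * a ^ 4)) := by
  have ht : a ^ 2 ≤ 1 / 2 := by
    have := Real.sq_sqrt (by norm_num : (1:ℝ)/2 ≥ 0)
    nlinarith [sq_nonneg a, mul_le_mul ha1 ha1 ha0.le (Real.sqrt_nonneg (1/2))]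
  have ht0 : 0 < a ^ 2 := by positivity
  have hd1 : (0:ℝ) < 157 - 360 * a ^ 2 + 144 * a ^ 4 := by nlinarith
  have hd2 : (0:ℝ) < 6238 - 15015 * a ^ 2 + 6300 * a ^ 4 := by nlinarith
  apply Real.sqrt_lt_sqrt
  · apply div_nonneg _ hd1.le
    nlinarith
  · rw [div_lt_div_iff₀ hd1 hd2]
    nlinarith [sq_nonneg (a^2), sq_nonneg (a^2 - 1/2), mul_pos ht0 ht0]
end

section
/- Fix 0 < κ < 1 and define the weight sequence x_0 := κ·√(3/4) and x_n := √((n+1)(n+3))/(n+2) for n ≥ 1. Let ξ be the measure on [0,1] given by ξ := (1−κ^2)·δ_0 + (κ^2/2)·λ + (κ^2/2)·δ_1, where λ is Lebesgue measure on [0,1] and δ_0, δ_1 are Dirac point masses at 0 and 1. Then ξ is a probability measure and for every integer N ≥ 0, ∏_{n=0}^{N−1} x_n^2 = ∫_{[0,1]} s^N dξ(s); equivalently, for N ≥ 1 this common value equals κ^2 (N+2) / (2(N+1)). -/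
/-!
The `N`-th moment of `ξ` is `(1 - κ²) 0^N + κ²/(2(N+1)) + κ²/2`, which for `N ≥ 1` is
`κ² (N+2) / (2(N+1))`; at `N = 0` it is the total mass `1`. The product of the squared weights
matches this: `x₀² = 3κ²/4` is the first moment, and for `N ≥ 1` the ratio of consecutive
moments is `(N+1)(N+3)/(N+2)² = x_N²`.
-/

open MeasureTheory Set

noncomputable def unitIntervalMixture (c₀ c₁ c₂ : ℝ) : Measure ℝ :=
  ENNReal.ofReal c₀ • Measure.dirac 0 + ENNReal.ofReal c₁ • volume.restrict (Icc (0 : ℝ) 1)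
    + ENNReal.ofReal c₂ • Measure.dirac 1

section unitIntervalMixture

variable {c₀ c₁ c₂ : ℝ}

theorem unitIntervalMixture_univ (h₀ : 0 ≤ c₀) (h₁ : 0 ≤ c₁) (h₂ : 0 ≤ c₂) :
    unitIntervalMixture c₀ c₁ c₂ univ = ENNReal.ofReal (c₀ + c₁ + c₂) := by
  simp only [unitIntervalMixture, Measure.add_apply, Measure.smul_apply, smul_eq_mul,
    measure_univ, Measure.restrict_apply_univ, Real.volume_Icc, sub_zero, ENNReal.ofReal_one,
    mul_one]
  rw [← ENNReal.ofReal_add h₀ h₁, ← ENNReal.ofReal_add (add_nonneg h₀ h₁) h₂]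

theorem setIntegral_Icc_unitIntervalMixture {f : ℝ → ℝ} (hf : ContinuousOn f (Icc 0 1))
    (h₀ : 0 ≤ c₀) (h₁ : 0 ≤ c₁) (h₂ : 0 ≤ c₂) :
    ∫ s in Icc 0 1, f s ∂(unitIntervalMixture c₀ c₁ c₂)
      = c₀ * f 0 + c₁ * (∫ s in Icc 0 1, f s) + c₂ * f 1 := by
  have h0 : (0 : ℝ) ∈ Icc (0 : ℝ) 1 := by norm_num
  have h1 : (1 : ℝ) ∈ Icc (0 : ℝ) 1 := by norm_num
  simp only [unitIntervalMixture, Measure.restrict_add, Measure.restrict_smul,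
    Measure.restrict_restrict measurableSet_Icc, inter_self, restrict_dirac, if_pos h0,
    if_pos h1]
  have hdirac (c a : ℝ) : Integrable f (ENNReal.ofReal c • Measure.dirac a) :=
    (integrable_dirac enorm_lt_top).smul_measure ENNReal.ofReal_ne_top
  have hvol : Integrable f (ENNReal.ofReal c₁ • volume.restrict (Icc (0 : ℝ) 1)) :=
    hf.integrableOn_Icc.integrable.smul_measure ENNReal.ofReal_ne_top
  rw [integral_add_measure ((hdirac c₀ 0).add_measure hvol) (hdirac c₂ 1),
    integral_add_measure (hdirac c₀ 0) hvol]
  simp only [integral_smul_measure, integral_dirac, ENNReal.toReal_ofReal h₀,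
    ENNReal.toReal_ofReal h₁, ENNReal.toReal_ofReal h₂, smul_eq_mul]

theorem setIntegral_Icc_pow_unitIntervalMixture (N : ℕ)
    (h₀ : 0 ≤ c₀) (h₁ : 0 ≤ c₁) (h₂ : 0 ≤ c₂) :
    ∫ s in Icc 0 1, s ^ N ∂(unitIntervalMixture c₀ c₁ c₂)
      = c₀ * 0 ^ N + c₁ / (N + 1) + c₂ := by
  rw [setIntegral_Icc_unitIntervalMixture (continuous_pow N).continuousOn h₀ h₁ h₂,
    integral_Icc_eq_integral_Ioc, ← intervalIntegral.integral_of_le zero_le_one, integral_pow]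
  simp [div_eq_mul_inv]

end unitIntervalMixture

theorem prod_range_sq_weights {κ : ℝ} {x : ℕ → ℝ}
    (hx0 : x 0 = κ * Real.sqrt (3 / 4))
    (hxn : ∀ n : ℕ, 1 ≤ n →
      x n = Real.sqrt (((n : ℝ) + 1) * ((n : ℝ) + 3)) / ((n : ℝ) + 2))
    {N : ℕ} (hN : 1 ≤ N) :
    ∏ n ∈ Finset.range N, x n ^ 2 = κ ^ 2 * ((N : ℝ) + 2) / (2 * ((N : ℝ) + 1)) := by
  induction N, hN using Nat.le_induction with
  | base =>
    rw [Finset.prod_range_one, hx0, mul_pow, Real.sq_sqrt (by norm_num)]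
    norm_num
    ring
  | succ N hN ih =>
    rw [Finset.prod_range_succ, ih, hxn N hN, div_pow, Real.sq_sqrt (by positivity)]
    push_cast
    field_simp
    ring

theorem bergman_like_shift_berger_measure
    (κ : ℝ) (hκ0 : 0 < κ) (hκ1 : κ < 1)
    (x : ℕ → ℝ)
    (hx0 : x 0 = κ * Real.sqrt (3 / 4))
    (hxn : ∀ n : ℕ, 1 ≤ n →
      x n = Real.sqrt (((n : ℝ) + 1) * ((n : ℝ) + 3)) / ((n : ℝ) + 2))
    (ξ : Measure ℝ)
    (hξ : ξ = ENNReal.ofReal (1 - κ ^ 2) • Measure.dirac 0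
        + ENNReal.ofReal (κ ^ 2 / 2) • volume.restrict (Set.Icc (0 : ℝ) 1)
        + ENNReal.ofReal (κ ^ 2 / 2) • Measure.dirac 1) :
    IsProbabilityMeasure ξ
      ∧ (∀ N : ℕ,
          (∏ n ∈ Finset.range N, (x n) ^ 2) = ∫ s in Set.Icc (0 : ℝ) 1, s ^ N ∂ξ)
      ∧ (∀ N : ℕ, 1 ≤ N →
          (∫ s in Set.Icc (0 : ℝ) 1, s ^ N ∂ξ)
            = κ ^ 2 * ((N : ℝ) + 2) / (2 * ((N : ℝ) + 1))) := by
  change ξ = unitIntervalMixture (1 - κ ^ 2) (κ ^ 2 / 2) (κ ^ 2 / 2) at hξ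
  have h₀ : 0 ≤ 1 - κ ^ 2 := by nlinarith
  have h₁ : 0 ≤ κ ^ 2 / 2 := by positivity
  have moment (N : ℕ) : ∫ s in Icc 0 1, s ^ N ∂ξ
      = (1 - κ ^ 2) * 0 ^ N + κ ^ 2 / 2 / (N + 1) + κ ^ 2 / 2 := by
    rw [hξ, setIntegral_Icc_pow_unitIntervalMixture N h₀ h₁ h₁]
  have moment_pos {N : ℕ} (hN : 1 ≤ N) :
      ∫ s in Icc 0 1, s ^ N ∂ξ = κ ^ 2 * ((N : ℝ) + 2) / (2 * ((N : ℝ) + 1)) := by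
    rw [moment, zero_pow (by omega)]
    field_simp
    ring
  refine ⟨⟨?_⟩, fun N => ?_, fun N hN => moment_pos hN⟩
  · rw [hξ, unitIntervalMixture_univ h₀ h₁ h₁]
    ring_nf
    exact ENNReal.ofReal_one
  · rcases Nat.eq_zero_or_pos N with rfl | hN
    · rw [moment]
      norm_num
      ring
    · rw [prod_range_sq_weights hx0 hxn hN, moment_pos hN]
end
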